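/- arXiv:2310.03853 — 3 statements merged into one kernel-verified Lean document; each statement's English description precedes it below -/
import Mathlib

section
/- Let mu, nu be probability measures on a measurable space X, set mu_t := (1-t)*mu + t*nu, and for each t in [0,1] let P_t be a Markov kernel on X with invariant distribution mu_t, i.e. ∫ P_t(x,A) mu_t(dx) = mu_t(A) for every measurable set A. Let f be bounded and measurable. Suppose the map t |-> ∫ P_t(x,f) mu(dx) has right derivative a at t = 0 and the map t |-> ∫ P_t(x,f) nu(dx) - ∫ P_t(x,f) mu(dx) is right-continuous at t = 0. Then a = ∫ ( f(y) - P_0(y,f) ) d(nu - mu)(y). In other words, the derivative in the invariant distribution of the kernel family at mu, with starting distribution mu, has density f - P_mu f with respect to the perturbation. -/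
/-!
Write `G t` and `H t` for the integrals of `P_t f` against `μ` and `ν`. Integrating `P_t f`
against its invariant law `μ_t` gives `(1 - t) G t + t H t = (1 - t) μ f + t ν f`. At `t = 0`
this says `G 0 = μ f`, and for `0 < t < 1` it turns the difference quotient `(G t - G 0) / t`
into `(ν f - H t) / (1 - t)`, which tends to `ν f - H 0 = (ν - μ)(f - P_0 f)`.
-/

open MeasureTheory ProbabilityTheory Filter Topology

theorem HasDerivWithinAt.eq_sub_of_convex_combination_eq {G H : ℝ → ℝ} {a c d : ℝ}
    (hmix : ∀ t ∈ Set.Ico (0 : ℝ) 1, (1 - t) * G t + t * H t = (1 - t) * c + t * d)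
    (hG : HasDerivWithinAt G a (Set.Ici 0) 0) (hH : ContinuousWithinAt H (Set.Ici 0) 0) :
    a = d - H 0 := by
  have hG0 : G 0 = c := by simpa using hmix 0 ⟨le_rfl, zero_lt_one⟩
  have hslope : Tendsto (slope G 0) (𝓝[>] 0) (𝓝 a) := by
    simpa [Set.Ici_sdiff_left] using hasDerivWithinAt_iff_tendsto_slope.mp hG
  have hquot : Tendsto (fun t => (d - H t) / (1 - t)) (𝓝[>] 0) (𝓝 (d - H 0)) := by
    have hden : ContinuousWithinAt (fun t : ℝ => 1 - t) (Set.Ici 0) 0 := by fun_prop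
    simpa [Pi.div_def] using
      ((continuousWithinAt_const.sub hH).div hden (by norm_num)).tendsto.mono_left
        (nhdsWithin_mono _ Set.Ioi_subset_Ici_self)
  have hslope_eq : slope G 0 =ᶠ[𝓝[>] 0] fun t => (d - H t) / (1 - t) := by
    filter_upwards [Ioo_mem_nhdsGT (zero_lt_one' ℝ)] with t ⟨ht0, ht1⟩
    have hk := hmix t ⟨ht0.le, ht1⟩
    rw [slope_def_field, hG0, sub_zero, div_eq_div_iff ht0.ne' (by linarith)]
    linarith
  exact tendsto_nhds_unique hslope (hquot.congr' hslope_eq.symm)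

section Kernel

variable {α β E : Type*} [MeasurableSpace α] [MeasurableSpace β]
  [NormedAddCommGroup E] [NormedSpace ℝ E]

theorem integral_measure_comp {κ : Kernel α β} {m : Measure α} {f : β → E}
    (hf : Integrable f (κ ∘ₘ m)) :
    ∫ y, f y ∂(κ ∘ₘ m) = ∫ x, ∫ y, f y ∂κ x ∂m := by
  rw [Measure.comp_eq_comp_const_apply] at hf ⊢
  exact Kernel.integral_comp hf

theorem integral_integral_of_comp_eq_self {κ : Kernel α α} {m : Measure α} {f : α → E}
    (hinv : κ ∘ₘ m = m) (hf : Integrable f m) :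
    ∫ x, ∫ y, f y ∂κ x ∂m = ∫ y, f y ∂m := by
  rw [← integral_measure_comp (hinv.symm ▸ hf), hinv]

end Kernel

section Bounded

variable {α β : Type*} [MeasurableSpace α] [MeasurableSpace β] {F : α → ℝ} {C : ℝ}

theorem integrable_of_abs_le {m : Measure α} [IsFiniteMeasure m] (hF : Measurable F)
    (hC : ∀ x, |F x| ≤ C) : Integrable F m :=
  .of_bound hF.aestronglyMeasurable C
    (ae_of_all _ fun x => (Real.norm_eq_abs _).trans_le (hC x))

theorem abs_integral_le_of_abs_le {m : Measure α} [IsProbabilityMeasure m]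
    (hC : ∀ x, |F x| ≤ C) : |∫ x, F x ∂m| ≤ C := by
  simpa using norm_integral_le_of_norm_le_const (μ := m)
    (ae_of_all _ fun x => (Real.norm_eq_abs _).trans_le (hC x))

theorem measurable_integral_kernel (κ : Kernel β α) (hF : Measurable F) :
    Measurable fun x => ∫ y, F y ∂κ x :=
  hF.stronglyMeasurable.integral_kernel.measurable

end Bounded

section Mixture

variable {X : Type*} [MeasurableSpace X]

/-- `μ_t = (1 - t) μ + t ν`; outside `[0, 1]` the `ENNReal.ofReal` truncations make it something
else. -/
noncomputable def mixture (μ ν : Measure X) (t : ℝ) : Measure X :=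
  ENNReal.ofReal (1 - t) • μ + ENNReal.ofReal t • ν

variable {μ ν : Measure X} {t : ℝ}

theorem isProbabilityMeasure_mixture [IsProbabilityMeasure μ] [IsProbabilityMeasure ν]
    (ht : t ∈ Set.Icc (0 : ℝ) 1) : IsProbabilityMeasure (mixture μ ν t) := by
  constructor
  simp only [mixture, Measure.add_apply, Measure.smul_apply, smul_eq_mul, measure_univ, mul_one]
  rw [← ENNReal.ofReal_add (by linarith [ht.2]) ht.1, sub_add_cancel, ENNReal.ofReal_one]

theorem integral_mixture {E : Type*} [NormedAddCommGroup E] [NormedSpace ℝ E] {f : X → E}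
    (ht : t ∈ Set.Icc (0 : ℝ) 1) (hμ : Integrable f μ) (hν : Integrable f ν) :
    ∫ x, f x ∂mixture μ ν t = (1 - t) • ∫ x, f x ∂μ + t • ∫ x, f x ∂ν := by
  rw [mixture, integral_add_measure (hμ.smul_measure ENNReal.ofReal_ne_top)
      (hν.smul_measure ENNReal.ofReal_ne_top), integral_smul_measure, integral_smul_measure,
    ENNReal.toReal_ofReal (by linarith [ht.2]), ENNReal.toReal_ofReal ht.1]

theorem integral_integral_kernel_mixture [IsProbabilityMeasure μ] [IsProbabilityMeasure ν]
    (ht : t ∈ Set.Icc (0 : ℝ) 1) {κ : Kernel X X} [IsMarkovKernel κ]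
    (hinv : κ ∘ₘ mixture μ ν t = mixture μ ν t) {f : X → ℝ} (hfm : Measurable f) {C : ℝ}
    (hC : ∀ x, |f x| ≤ C) :
    (1 - t) * ∫ x, ∫ y, f y ∂κ x ∂μ + t * ∫ x, ∫ y, f y ∂κ x ∂ν
      = (1 - t) * ∫ y, f y ∂μ + t * ∫ y, f y ∂ν := by
  have := isProbabilityMeasure_mixture (μ := μ) (ν := ν) ht
  have hκf := measurable_integral_kernel κ hfm
  have hκC : ∀ x, |∫ y, f y ∂κ x| ≤ C := fun x => abs_integral_le_of_abs_le hC
  have h := integral_integral_of_comp_eq_self hinv (integrable_of_abs_le hfm hC)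
  rwa [integral_mixture ht (integrable_of_abs_le hκf hκC) (integrable_of_abs_le hκf hκC),
    integral_mixture ht (integrable_of_abs_le hfm hC) (integrable_of_abs_le hfm hC)] at h

end Mixture

/-- **The density of the derivative in the invariant distribution at `ρ = μ` is
`f - P_μ f`.**  Let `μ, ν` be probability measures, `μ_t := (1-t)μ + tν`, and for each
`t ∈ [0,1]` let `P t` be a Markov kernel with invariant distribution `μ_t`.  If
`t ↦ ∫ P_t(x,f) μ(dx)` has right derivative `a` at `t = 0` and
`t ↦ ∫ P_t(x,f) ν(dx) - ∫ P_t(x,f) μ(dx)` is right-continuous at `t = 0`, then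
`a = ∫ (f(y) - P_0(y,f)) d(ν - μ)(y)`. -/
theorem stmt_3 {X : Type*} [MeasurableSpace X]
    (μ ν : Measure X) [IsProbabilityMeasure μ] [IsProbabilityMeasure ν]
    (P : ℝ → Kernel X X) (hPm : ∀ t ∈ Set.Icc (0 : ℝ) 1, IsMarkovKernel (P t))
    (hinv : ∀ t ∈ Set.Icc (0 : ℝ) 1, ∀ A : Set X, MeasurableSet A →
      ∫⁻ x, (P t) x A ∂(ENNReal.ofReal (1 - t) • μ + ENNReal.ofReal t • ν)
        = (ENNReal.ofReal (1 - t) • μ + ENNReal.ofReal t • ν) A)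
    (f : X → ℝ) (hfm : Measurable f) (hfb : ∃ C, ∀ x, |f x| ≤ C)
    (a : ℝ)
    (hderiv : HasDerivWithinAt (fun t => ∫ x, ∫ y, f y ∂((P t) x) ∂μ) a (Set.Ici 0) 0)
    (hcont : ContinuousWithinAt
      (fun t => (∫ x, ∫ y, f y ∂((P t) x) ∂ν) - ∫ x, ∫ y, f y ∂((P t) x) ∂μ)
      (Set.Ici 0) 0) :
    a = (∫ y, (f y - ∫ z, f z ∂((P 0) y)) ∂ν) - ∫ y, (f y - ∫ z, f z ∂((P 0) y)) ∂μ := by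
  obtain ⟨C, hC⟩ := hfb
  have hmix : ∀ t ∈ Set.Icc (0 : ℝ) 1,
      (1 - t) * ∫ x, ∫ y, f y ∂(P t) x ∂μ + t * ∫ x, ∫ y, f y ∂(P t) x ∂ν
        = (1 - t) * ∫ y, f y ∂μ + t * ∫ y, f y ∂ν := fun t ht =>
    have := hPm t ht
    integral_integral_kernel_mixture ht (Measure.ext fun A hA =>
      (Measure.bind_apply hA (P t).aemeasurable).trans (hinv t ht A hA)) hfm hC
  have hG0 : ∫ x, ∫ y, f y ∂(P 0) x ∂μ = ∫ y, f y ∂μ := by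
    simpa using hmix 0 ⟨le_rfl, zero_le_one⟩
  have hH : ContinuousWithinAt (fun t => ∫ x, ∫ y, f y ∂(P t) x ∂ν) (Set.Ici 0) 0 := by
    simpa [Pi.add_def] using hcont.add hderiv.continuousWithinAt
  have ha := hderiv.eq_sub_of_convex_combination_eq
    (fun t ht => hmix t ⟨ht.1, ht.2.le⟩) hH
  have := hPm 0 ⟨le_rfl, zero_le_one⟩
  have hP0f : ∀ m : Measure X, [IsProbabilityMeasure m] →
      Integrable (fun y => ∫ z, f z ∂(P 0) y) m := fun m _ =>
    integrable_of_abs_le (measurable_integral_kernel _ hfm) fun _ => abs_integral_le_of_abs_le hC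
  rw [integral_sub (integrable_of_abs_le hfm hC) (hP0f ν),
    integral_sub (integrable_of_abs_le hfm hC) (hP0f μ), hG0, ha]
  ring
end

section
/- Let X be a measurable space equipped with a sigma-finite measure lambda, V : X -> [1,infinity) measurable, and let g be a balancing function that is twice differentiable and non-decreasing with g' and g'' bounded. Let q be a bounded positive proposal density, and let mu, nu be probability measures with everywhere positive bounded densities with respect to lambda satisfying ∫ V dmu < infinity and ∫ V dnu < infinity. Fix x in X and let f be measurable with ||f||_V < infinity. Then the map t |-> P_{mu_t}(x,f), where P_{mu_t} is the Hastings kernel with invariant distribution mu_t, has right derivative at t = 0 equal to ∫ (nu(y) - mu(y)) (f(y) - f(x)) g'(r_mu(x,y)) q(y,x) / mu(x) lambda(dy) - (nu(x) - mu(x)) * (1/mu(x)^2) * ∫ (f(z) - f(x)) q(z,x) g'(r_mu(x,z)) mu(z) lambda(dz). -/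
/-!
Only the acceptance part of `P_{μ_t}(x, f)` moves with `t`: the rejection mass is
`1 - ∫ g(r) q`, so `P_{μ_t}(x, f) = f(x) + ∫ (f(y) - f(x)) g(r_{μ_t}(x,y)) q(x,y) λ(dy)`.
Balancing and `g ≤ 1` give `g(r) ≤ r`, so this integrand is dominated by
`|f(y) - f(x)| μ_t(y) q(y,x) / μ_t(x)`, which is integrable because `|f| ≤ C V`.

For `t > 0`,
`q(x,y) (r_{μ_t}(x,y) - r_μ(x,y)) = t (ν(y)μ(x) - μ(y)ν(x)) q(y,x) / (μ_t(x) μ(x))`,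
so by the mean value theorem for `g` and the bounds on `g'` and `q`, the difference quotients
in `t` are dominated by a multiple of `|f(y) - f(x)| (μ(y) + ν(y))`, uniformly in `t ∈ (0,1]`.
Dominated convergence then differentiates under the integral, and
`ν(y)μ(x) - μ(y)ν(x) = (ν(y) - μ(y)) μ(x) - μ(y) (ν(x) - μ(x))` separates the density part
of the derivative from the part coming from the rejection mass at `x`.
-/

open MeasureTheory ProbabilityTheory

/-- The Hastings ratio `r_μ(x,y) = μ(y)q(y,x) / (μ(x)q(x,y))` for a target density `p`. -/
noncomputable def hastingsRatio {X : Type*} (q : X → X → ℝ) (p : X → ℝ) (x y : X) : ℝ :=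
  p y * q y x / (p x * q x y)

/-- The Hastings kernel with balancing function `g`, proposal density `q` and invariant
density `p`, applied to starting point `x` and test function `f`. -/
noncomputable def hastingsKernelFun {X : Type*} [MeasurableSpace X] (lam : Measure X)
    (g : ℝ → ℝ) (q : X → X → ℝ) (p : X → ℝ) (x : X) (f : X → ℝ) : ℝ :=
  (∫ y, f y * g (hastingsRatio q p x y) * q x y ∂lam)
    + f x * (1 - ∫ y, g (hastingsRatio q p x y) * q x y ∂lam)

open Set Filter Topology

theorem hasDerivWithinAt_integral_Ici_of_dominated {α E : Type*} [MeasurableSpace α]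
    {μ : Measure α} [NormedAddCommGroup E] [NormedSpace ℝ E] [CompleteSpace E]
    {F : ℝ → α → E} {F' : α → E} {t₀ : ℝ} (bound : α → ℝ)
    (hF_int : ∀ᶠ t in 𝓝[≥] t₀, Integrable (F t) μ)
    (h_bound : ∀ᶠ t in 𝓝[>] t₀, ∀ᵐ a ∂μ, ‖slope (F · a) t₀ t‖ ≤ bound a)
    (bound_integrable : Integrable bound μ)
    (h_diff : ∀ᵐ a ∂μ, HasDerivWithinAt (F · a) (F' a) (Ici t₀) t₀) :
    HasDerivWithinAt (fun t => ∫ a, F t a ∂μ) (∫ a, F' a ∂μ) (Ici t₀) t₀ := by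
  have hF₀ : Integrable (F t₀) μ := hF_int.self_of_nhdsWithin self_mem_Ici
  have hF_int' : ∀ᶠ t in 𝓝[>] t₀, Integrable (F t) μ :=
    nhdsWithin_mono _ Ioi_subset_Ici_self hF_int
  rw [← hasDerivWithinAt_Ioi_iff_Ici, hasDerivWithinAt_iff_tendsto_slope' self_notMem_Ioi]
  have h_lim := tendsto_integral_filter_of_dominated_convergence
    (F := fun t a => slope (F · a) t₀ t) bound
    (hF_int'.mono fun t ht => ((ht.sub hF₀).smul (t - t₀)⁻¹).aestronglyMeasurable) h_bound
    bound_integrable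
    (h_diff.mono fun a ha => (hasDerivWithinAt_iff_tendsto_slope' self_notMem_Ioi).1 ha.Ioi_of_Ici)
  refine h_lim.congr' (hF_int'.mono fun t ht => ?_)
  simp only [slope_def_module]
  rw [integral_smul, integral_sub ht hF₀]

section PositiveAxis

variable {X : Type*} [MeasurableSpace X] {g g' : ℝ → ℝ} {r : X → ℝ}

theorem Measurable.comp_of_continuousAt_pos (hg : ∀ u, 0 < u → ContinuousAt g u)
    (hr : Measurable r) (hr_pos : ∀ y, 0 < r y) : Measurable fun y => g (r y) := by
  have hg_exp : Continuous fun u => g (Real.exp u) := continuous_iff_continuousAt.2 fun u =>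
    (hg _ (Real.exp_pos u)).comp Real.continuous_exp.continuousAt
  convert hg_exp.measurable.comp (Real.measurable_log.comp hr) using 2 with y
  simp only [Function.comp_apply, Real.exp_log (hr_pos y)]

theorem Measurable.comp_of_hasDerivAt_pos (hg : ∀ u, 0 < u → HasDerivAt g (g' u) u)
    (hr : Measurable r) (hr_pos : ∀ y, 0 < r y) : Measurable fun y => g' (r y) := by
  have h : (fun y => g' (r y)) = fun y => deriv g (r y) :=
    funext fun y => (hg _ (hr_pos y)).deriv.symm
  exact h ▸ (measurable_deriv g).comp hr

theorem abs_sub_le_of_hasDerivAt_pos {c : ℝ} (hg : ∀ u, 0 < u → HasDerivAt g (g' u) u)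
    (hg'_le : ∀ u, 0 < u → |g' u| ≤ c) {a b : ℝ} (ha : 0 < a) (hb : 0 < b) :
    |g b - g a| ≤ c * |b - a| := by
  simpa only [Real.norm_eq_abs] using (convex_Ioi 0).norm_image_sub_le_of_norm_hasDerivWithin_le
    (fun u hu => (hg u hu).hasDerivWithinAt) (fun u hu => hg'_le u hu) ha hb

theorem abs_sub_le_of_abs_le_mul {b a c v : ℝ} (hb : |b| ≤ c * v) (hv : 1 ≤ v) :
    |b - a| ≤ (c + |a|) * v := calc
  |b - a| ≤ c * v + |a| * v :=
    (abs_sub _ _).trans (add_le_add hb (le_mul_of_one_le_right (abs_nonneg _) hv))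
  _ = (c + |a|) * v := by ring

theorem le_self_of_balancing (hg_le : ∀ u, 0 < u → g u ≤ 1)
    (hg_bal : ∀ u, 0 < u → g u = u * g (1 / u)) {u : ℝ} (hu : 0 < u) : g u ≤ u := by
  rw [hg_bal u hu]
  simpa using mul_le_mul_of_nonneg_left (hg_le _ (one_div_pos.2 hu)) hu.le

end PositiveAxis

section HastingsRatio

variable {X : Type*} {q : X → X → ℝ} {p : X → ℝ}

theorem hastingsRatio_pos (hq : ∀ x y, 0 < q x y) (hp : ∀ y, 0 < p y) (x y : X) :
    0 < hastingsRatio q p x y :=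
  div_pos (mul_pos (hp y) (hq y x)) (mul_pos (hp x) (hq x y))

theorem hastingsRatio_mul {x y : X} (hq : q x y ≠ 0) :
    hastingsRatio q p x y * q x y = p y * q y x / p x := by
  rw [hastingsRatio, div_mul_eq_mul_div, mul_div_mul_right _ _ hq]

theorem measurable_hastingsRatio [MeasurableSpace X] (hq : Measurable (Function.uncurry q))
    (hp : Measurable p) (x : X) : Measurable (hastingsRatio q p x) :=
  (hp.mul (hq.comp (measurable_id.prodMk measurable_const))).div
    (measurable_const.mul (hq.comp measurable_prodMk_left))

end HastingsRatio

noncomputable def mixtureDensity {X : Type*} (pμ pν : X → ℝ) (t : ℝ) (y : X) : ℝ :=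
  (1 - t) * pμ y + t * pν y

section Mixture

variable {X : Type*} {pμ pν : X → ℝ} {t : ℝ}

@[simp]
theorem mixtureDensity_zero : mixtureDensity pμ pν 0 = pμ := by
  ext; simp [mixtureDensity]

theorem min_le_mixtureDensity (ht : t ∈ Icc 0 1) (y : X) :
    min (pμ y) (pν y) ≤ mixtureDensity pμ pν t y := by
  unfold mixtureDensity
  nlinarith [min_le_left (pμ y) (pν y), min_le_right (pμ y) (pν y), ht.1, ht.2]

theorem mixtureDensity_pos (hpμ : ∀ y, 0 < pμ y) (hpν : ∀ y, 0 < pν y) (ht : t ∈ Icc 0 1)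
    (y : X) : 0 < mixtureDensity pμ pν t y :=
  (lt_min (hpμ y) (hpν y)).trans_le (min_le_mixtureDensity ht y)

theorem measurable_mixtureDensity [MeasurableSpace X] (hpμ : Measurable pμ)
    (hpν : Measurable pν) (t : ℝ) : Measurable (mixtureDensity pμ pν t) :=
  (hpμ.const_mul _).add (hpν.const_mul _)

theorem hasDerivAt_mixtureDensity (y : X) :
    HasDerivAt (fun t => mixtureDensity pμ pν t y) (pν y - pμ y) t := by
  have h := (((hasDerivAt_id t).const_sub 1).mul_const (pμ y)).add
    ((hasDerivAt_id t).mul_const (pν y))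
  exact h.congr_deriv (by ring)

theorem MeasureTheory.Integrable.mul_mixtureDensity [MeasurableSpace X] {lam : Measure X}
    {φ : X → ℝ} (hμ : Integrable (fun y => φ y * pμ y) lam)
    (hν : Integrable (fun y => φ y * pν y) lam)
    (t : ℝ) : Integrable (fun y => φ y * mixtureDensity pμ pν t y) lam :=
  ((hμ.const_mul (1 - t)).add (hν.const_mul t)).congr
    (ae_of_all _ fun y => by simp only [Pi.add_apply, mixtureDensity]; ring)

variable {q : X → X → ℝ}

theorem hasDerivAt_hastingsRatio_mixtureDensity (hq : ∀ x y, 0 < q x y)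
    (hpμ : ∀ y, 0 < pμ y) (x y : X) :
    HasDerivAt (fun t => hastingsRatio q (mixtureDensity pμ pν t) x y)
      ((pν y * pμ x - pμ y * pν x) * q y x / (pμ x ^ 2 * q x y)) 0 := by
  have hden : mixtureDensity pμ pν 0 x * q x y ≠ 0 := by
    simp [(hpμ x).ne', (hq x y).ne']
  refine (((hasDerivAt_mixtureDensity y).mul_const (q y x)).div
    ((hasDerivAt_mixtureDensity x).mul_const (q x y)) hden).congr_deriv ?_
  simp only [mixtureDensity_zero]
  field_simp
  ring

theorem mul_hastingsRatio_mixtureDensity_sub {x y : X} (hq : q x y ≠ 0) (hpμ : pμ x ≠ 0)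
    (hpt : mixtureDensity pμ pν t x ≠ 0) :
    q x y * (hastingsRatio q (mixtureDensity pμ pν t) x y - hastingsRatio q pμ x y)
      = t * ((pν y * pμ x - pμ y * pν x) * q y x / (mixtureDensity pμ pν t x * pμ x)) := by
  unfold hastingsRatio
  unfold mixtureDensity at *
  field_simp
  ring

end Mixture

section Integrability

variable {X : Type*} [MeasurableSpace X] {lam : Measure X} {g : ℝ → ℝ} {q : X → X → ℝ}
  {p : X → ℝ}

theorem integrable_mul_of_abs_le_mul {φ V : X → ℝ} {c : ℝ} (hφ : Measurable φ)
    (hp : Measurable p) (hp_nonneg : ∀ y, 0 ≤ p y) (hφV : ∀ y, |φ y| ≤ c * V y)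
    (hVp : Integrable (fun y => V y * p y) lam) : Integrable (fun y => φ y * p y) lam := by
  refine (hVp.const_mul c).mono' (hφ.mul hp).aestronglyMeasurable (ae_of_all _ fun y => ?_)
  rw [Real.norm_eq_abs, abs_mul, abs_of_nonneg (hp_nonneg y), ← mul_assoc]
  exact mul_le_mul_of_nonneg_right (hφV y) (hp_nonneg y)

theorem integrable_mul_g_hastingsRatio_mul {cq : ℝ} (hg : ∀ u, 0 < u → 0 ≤ g u ∧ g u ≤ u)
    (hg_cont : ∀ u, 0 < u → ContinuousAt g u) (hqm : Measurable (Function.uncurry q))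
    (hq : ∀ x y, 0 < q x y) (hq_le : ∀ x y, q x y ≤ cq) (hpm : Measurable p)
    (hp : ∀ y, 0 < p y) {φ : X → ℝ} (hφm : Measurable φ)
    (hφp : Integrable (fun y => φ y * p y) lam) (x : X) :
    Integrable (fun y => φ y * g (hastingsRatio q p x y) * q x y) lam := by
  refine (hφp.norm.const_mul (cq / p x)).mono' ((hφm.mul ((measurable_hastingsRatio hqm hpm
    x).comp_of_continuousAt_pos hg_cont (hastingsRatio_pos hq hp x))).mul
    (hqm.comp measurable_prodMk_left)).aestronglyMeasurable (ae_of_all _ fun y => ?_)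
  obtain ⟨hg0, hgr⟩ := hg _ (hastingsRatio_pos hq hp x y)
  calc ‖φ y * g (hastingsRatio q p x y) * q x y‖
      = |φ y| * (g (hastingsRatio q p x y) * q x y) := by
        rw [Real.norm_eq_abs, mul_assoc, abs_mul, abs_of_nonneg (mul_nonneg hg0 (hq x y).le)]
    _ ≤ |φ y| * (p y * q y x / p x) := by
        rw [← hastingsRatio_mul (hq x y).ne']
        gcongr
        exact (hq x y).le
    _ ≤ |φ y| * (p y * cq / p x) := by
        gcongr
        · exact (hp x).le
        · exact (hp y).le
        · exact hq_le y x
    _ = cq / p x * ‖φ y * p y‖ := by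
        rw [Real.norm_eq_abs, abs_mul, abs_of_pos (hp y)]
        ring

theorem hastingsKernelFun_eq_add_integral {cq : ℝ} (hg : ∀ u, 0 < u → 0 ≤ g u ∧ g u ≤ u)
    (hg_cont : ∀ u, 0 < u → ContinuousAt g u) (hqm : Measurable (Function.uncurry q))
    (hq : ∀ x y, 0 < q x y) (hq_le : ∀ x y, q x y ≤ cq) (hpm : Measurable p)
    (hp : ∀ y, 0 < p y) {f : X → ℝ} (hfm : Measurable f) {x : X}
    (hfp : Integrable (fun y => (f y - f x) * p y) lam) (hp_int : Integrable p lam) :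
    hastingsKernelFun lam g q p x f
      = f x + ∫ y, (f y - f x) * g (hastingsRatio q p x y) * q x y ∂lam := by
  have hf := integrable_mul_g_hastingsRatio_mul hg hg_cont hqm hq hq_le hpm hp
    (hfm.sub_const (f x)) hfp x
  have h1 : Integrable (fun y => g (hastingsRatio q p x y) * q x y) lam := by
    simpa using integrable_mul_g_hastingsRatio_mul hg hg_cont hqm hq hq_le hpm hp
      measurable_const (φ := fun _ => 1) (by simpa using hp_int) x
  have h : (fun y => f y * g (hastingsRatio q p x y) * q x y) = fun y =>
      (f y - f x) * g (hastingsRatio q p x y) * q x y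
        + f x * (g (hastingsRatio q p x y) * q x y) := by
    ext y
    ring
  rw [hastingsKernelFun, h, integral_add hf (h1.const_mul _), integral_const_mul]
  ring

end Integrability

section MixtureDerivative

variable {X : Type*} {g g' : ℝ → ℝ} {q : X → X → ℝ} {pμ pν : X → ℝ} {cg cq : ℝ}

theorem norm_slope_mul_g_hastingsRatio_mixtureDensity_le
    (hg' : ∀ u, 0 < u → HasDerivAt g (g' u) u) (hg'_le : ∀ u, 0 < u → |g' u| ≤ cg)
    (hq : ∀ x y, 0 < q x y) (hq_le : ∀ x y, q x y ≤ cq) (hpμ : ∀ y, 0 < pμ y)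
    (hpν : ∀ y, 0 < pν y) (φ : X → ℝ) (x y : X) {t : ℝ} (ht : t ∈ Ioc 0 1) :
    ‖slope (fun t => φ y * g (hastingsRatio q (mixtureDensity pμ pν t) x y) * q x y) 0 t‖
      ≤ cg * cq * (pμ x + pν x) / (min (pμ x) (pν x) * pμ x) * (|φ y| * (pμ y + pν y)) := by
  set r := fun s => hastingsRatio q (mixtureDensity pμ pν s) x y
  have ht' : t ∈ Icc (0 : ℝ) 1 := Ioc_subset_Icc_self ht
  have hpt := mixtureDensity_pos hpμ hpν ht' x
  have hcg : 0 ≤ cg := (abs_nonneg _).trans (hg'_le 1 one_pos)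
  have hcq : 0 ≤ cq := (hq x x).le.trans (hq_le x x)
  have hr0 : r 0 = hastingsRatio q pμ x y := by simp [r]
  have hmvt : |g (r t) - g (r 0)| ≤ cg * |r t - r 0| :=
    abs_sub_le_of_hasDerivAt_pos hg' hg'_le (hastingsRatio_pos hq (mixtureDensity_pos hpμ hpν
      ⟨le_rfl, zero_le_one⟩) x y) (hastingsRatio_pos hq (mixtureDensity_pos hpμ hpν ht') x y)
  have hcross : |pν y * pμ x - pμ y * pν x| * q y x ≤ (pμ x + pν x) * (pμ y + pν y) * cq := by
    refine mul_le_mul ((abs_sub _ _).trans ?_) (hq_le y x) (hq y x).le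
      (mul_nonneg (add_pos (hpμ x) (hpν x)).le (add_pos (hpμ y) (hpν y)).le)
    rw [abs_of_pos (mul_pos (hpν y) (hpμ x)), abs_of_pos (mul_pos (hpμ y) (hpν x))]
    nlinarith [hpμ x, hpν x, hpμ y, hpν y]
  calc ‖slope (fun t => φ y * g (r t) * q x y) 0 t‖
      = |φ y| * (q x y * |g (r t) - g (r 0)|) / t := by
        rw [slope_def_field, Real.norm_eq_abs, abs_div, sub_zero, abs_of_pos ht.1,
          ← mul_sub_right_distrib, ← mul_sub, abs_mul, abs_mul, abs_of_pos (hq x y)]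
        ring
    _ ≤ |φ y| * (cg * |q x y * (r t - r 0)|) / t := by
        rw [abs_mul, abs_of_pos (hq x y), mul_left_comm cg]
        gcongr
        exacts [ht.1.le, (hq x y).le]
    _ = cg * |φ y| * (|pν y * pμ x - pμ y * pν x| * q y x) / (mixtureDensity pμ pν t x * pμ x) := by
        rw [hr0, mul_hastingsRatio_mixtureDensity_sub (hq x y).ne' (hpμ x).ne' hpt.ne', abs_mul,
          abs_of_pos ht.1, abs_div, abs_mul, abs_of_pos (hq y x),
          abs_of_pos (mul_pos hpt (hpμ x))]
        have := ht.1.ne'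
        field_simp
    _ ≤ cg * |φ y| * ((pμ x + pν x) * (pμ y + pν y) * cq) / (min (pμ x) (pν x) * pμ x) := by
        have hcφ : 0 ≤ cg * |φ y| := mul_nonneg hcg (abs_nonneg _)
        exact div_le_div₀ (mul_nonneg hcφ ((mul_nonneg (abs_nonneg _) (hq y x).le).trans hcross))
          (mul_le_mul_of_nonneg_left hcross hcφ)
          (mul_pos (lt_min (hpμ x) (hpν x)) (hpμ x))
          (mul_le_mul_of_nonneg_right (min_le_mixtureDensity ht' x) (hpμ x).le)
    _ = cg * cq * (pμ x + pν x) / (min (pμ x) (pν x) * pμ x) * (|φ y| * (pμ y + pν y)) := by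
        ring

theorem hasDerivAt_mul_g_hastingsRatio_mixtureDensity
    (hg' : ∀ u, 0 < u → HasDerivAt g (g' u) u) (hq : ∀ x y, 0 < q x y) (hpμ : ∀ y, 0 < pμ y)
    (φ : X → ℝ) (x y : X) :
    HasDerivAt (fun t => φ y * g (hastingsRatio q (mixtureDensity pμ pν t) x y) * q x y)
      (φ y * g' (hastingsRatio q pμ x y) * (pν y * pμ x - pμ y * pν x) * q y x / pμ x ^ 2) 0 := by
  have h := ((hg' _ (hastingsRatio_pos hq hpμ x y)).comp_of_eq 0
    (hasDerivAt_hastingsRatio_mixtureDensity (pν := pν) hq hpμ x y) (by simp)).const_mul (φ y)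
  refine (h.mul_const (q x y)).congr_deriv ?_
  have := (hq x y).ne'
  have := (hpμ x).ne'
  field_simp

theorem hasDerivWithinAt_integral_mul_g_hastingsRatio_mixtureDensity [MeasurableSpace X]
    {lam : Measure X} (hg : ∀ u, 0 < u → 0 ≤ g u ∧ g u ≤ u)
    (hg' : ∀ u, 0 < u → HasDerivAt g (g' u) u) (hg'_le : ∀ u, 0 < u → |g' u| ≤ cg)
    (hqm : Measurable (Function.uncurry q)) (hq : ∀ x y, 0 < q x y) (hq_le : ∀ x y, q x y ≤ cq)
    (hpμm : Measurable pμ) (hpνm : Measurable pν) (hpμ : ∀ y, 0 < pμ y) (hpν : ∀ y, 0 < pν y)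
    {φ : X → ℝ} (hφm : Measurable φ) (hφμ : Integrable (fun y => φ y * pμ y) lam)
    (hφν : Integrable (fun y => φ y * pν y) lam) (x : X) :
    HasDerivWithinAt
      (fun t => ∫ y, φ y * g (hastingsRatio q (mixtureDensity pμ pν t) x y) * q x y ∂lam)
      (∫ y, φ y * g' (hastingsRatio q pμ x y) * (pν y * pμ x - pμ y * pν x) * q y x / pμ x ^ 2
        ∂lam) (Ici 0) 0 := by
  have hg_cont : ∀ u, 0 < u → ContinuousAt g u := fun u hu => (hg' u hu).continuousAt
  refine hasDerivWithinAt_integral_Ici_of_dominated _ ?_ ?_ ((hφμ.norm.add hφν.norm).const_mul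
    (cg * cq * (pμ x + pν x) / (min (pμ x) (pν x) * pμ x))) ?_
  · filter_upwards [Ico_mem_nhdsGE one_pos] with t ht
    exact integrable_mul_g_hastingsRatio_mul hg hg_cont hqm hq hq_le
      (measurable_mixtureDensity hpμm hpνm t) (mixtureDensity_pos hpμ hpν (Ico_subset_Icc_self ht))
      hφm (hφμ.mul_mixtureDensity hφν t) x
  · filter_upwards [Ioo_mem_nhdsGT one_pos] with t ht
    refine ae_of_all _ fun y => (norm_slope_mul_g_hastingsRatio_mixtureDensity_le hg' hg'_le hq
      hq_le hpμ hpν φ x y (Ioo_subset_Ioc_self ht)).trans_eq ?_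
    rw [Pi.add_apply, Real.norm_eq_abs, Real.norm_eq_abs, abs_mul, abs_mul, abs_of_pos (hpμ y),
      abs_of_pos (hpν y), mul_add |φ y|]
  · exact ae_of_all _ fun y =>
      (hasDerivAt_mul_g_hastingsRatio_mixtureDensity hg' hq hpμ φ x y).hasDerivWithinAt

theorem integral_mul_deriv_hastingsRatio_mixtureDensity_eq [MeasurableSpace X]
    {lam : Measure X} (hg' : ∀ u, 0 < u → HasDerivAt g (g' u) u)
    (hg'_le : ∀ u, 0 < u → |g' u| ≤ cg) (hqm : Measurable (Function.uncurry q))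
    (hq : ∀ x y, 0 < q x y) (hq_le : ∀ x y, q x y ≤ cq) (hpμm : Measurable pμ)
    (hpμ : ∀ y, 0 < pμ y) {φ : X → ℝ} (hφμ : Integrable (fun y => φ y * pμ y) lam)
    (hφν : Integrable (fun y => φ y * pν y) lam) (x : X) :
    ∫ y, φ y * g' (hastingsRatio q pμ x y) * (pν y * pμ x - pμ y * pν x) * q y x / pμ x ^ 2 ∂lam
      = (∫ y, (pν y - pμ y) * φ y * g' (hastingsRatio q pμ x y) * q y x / pμ x ∂lam)
        - (pν x - pμ x) * (1 / pμ x ^ 2) *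
            ∫ z, φ z * q z x * g' (hastingsRatio q pμ x z) * pμ z ∂lam := by
  have hψm : AEStronglyMeasurable (fun y => g' (hastingsRatio q pμ x y) * q y x) lam :=
    (((measurable_hastingsRatio hqm hpμm x).comp_of_hasDerivAt_pos hg'
      (hastingsRatio_pos hq hpμ x)).mul
      (hqm.comp (measurable_id.prodMk measurable_const))).aestronglyMeasurable
  have hψ_le : ∀ᵐ y ∂lam, ‖g' (hastingsRatio q pμ x y) * q y x‖ ≤ cg * cq :=
    ae_of_all _ fun y => by
      have hg'y := hg'_le _ (hastingsRatio_pos hq hpμ x y)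
      rw [Real.norm_eq_abs, abs_mul, abs_of_pos (hq y x)]
      exact mul_le_mul hg'y (hq_le y x) (hq y x).le ((abs_nonneg _).trans hg'y)
  have hA : Integrable
      (fun y => (pν y - pμ y) * φ y * g' (hastingsRatio q pμ x y) * q y x / pμ x) lam :=
    (((hφν.sub hφμ).mul_bdd hψm hψ_le).div_const (pμ x)).congr
      (ae_of_all _ fun y => by simp only [Pi.sub_apply]; ring)
  have hB : Integrable (fun z => φ z * q z x * g' (hastingsRatio q pμ x z) * pμ z) lam :=
    (hφμ.mul_bdd hψm hψ_le).congr (ae_of_all _ fun y => by ring)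
  rw [← integral_const_mul, ← integral_sub hA (hB.const_mul _)]
  refine integral_congr_ae (ae_of_all _ fun y => ?_)
  have := (hpμ x).ne'
  field_simp
  ring

end MixtureDerivative

theorem stmt_6_general {X : Type*} [MeasurableSpace X]
    (lam : Measure X)
    (V : X → ℝ) (hV1 : ∀ x, 1 ≤ V x)
    (g g' : ℝ → ℝ)
    (hgpos : ∀ u : ℝ, 0 < u → 0 < g u ∧ g u ≤ 1)
    (hgbal : ∀ u : ℝ, 0 < u → g u = u * g (1 / u))
    (hg' : ∀ u : ℝ, 0 < u → HasDerivAt g (g' u) u)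
    (hg'b : ∃ c, ∀ u : ℝ, 0 < u → |g' u| ≤ c)
    (q : X → X → ℝ) (hqm : Measurable (Function.uncurry q))
    (hqpos : ∀ x y, 0 < q x y) (hqb : ∃ c, ∀ x y, q x y ≤ c)
    (pμ pν : X → ℝ) (hpμm : Measurable pμ) (hpνm : Measurable pν)
    (hpμpos : ∀ x, 0 < pμ x) (hpνpos : ∀ x, 0 < pν x)
    (hVμ : Integrable (fun x => V x * pμ x) lam)
    (hVν : Integrable (fun x => V x * pν x) lam)
    (x : X)
    (f : X → ℝ) (hfm : Measurable f) (hfV : ∃ c, ∀ y, |f y| ≤ c * V y) :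
    HasDerivWithinAt
      (fun t => hastingsKernelFun lam g q (fun y => (1 - t) * pμ y + t * pν y) x f)
      ((∫ y, (pν y - pμ y) * (f y - f x) * g' (hastingsRatio q pμ x y) * q y x / pμ x ∂lam)
        - (pν x - pμ x) * (1 / pμ x ^ 2) *
            ∫ z, (f z - f x) * q z x * g' (hastingsRatio q pμ x z) * pμ z ∂lam)
      (Set.Ici 0) 0 := by
  obtain ⟨cg, hcg⟩ := hg'b
  obtain ⟨cq, hcq⟩ := hqb
  obtain ⟨cf, hcf⟩ := hfV
  have hg : ∀ u, 0 < u → 0 ≤ g u ∧ g u ≤ u := fun u hu =>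
    ⟨(hgpos u hu).1.le, le_self_of_balancing (fun v hv => (hgpos v hv).2) hgbal hu⟩
  have hint (φ : X → ℝ) (c : ℝ) (hφm : Measurable φ) (hφV : ∀ y, |φ y| ≤ c * V y) :
      Integrable (fun y => φ y * pμ y) lam ∧ Integrable (fun y => φ y * pν y) lam :=
    ⟨integrable_mul_of_abs_le_mul hφm hpμm (fun y => (hpμpos y).le) hφV hVμ,
      integrable_mul_of_abs_le_mul hφm hpνm (fun y => (hpνpos y).le) hφV hVν⟩
  have hfint := hint _ _ (hfm.sub_const (f x)) fun y => abs_sub_le_of_abs_le_mul (hcf y) (hV1 y)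
  have h1 := hint (fun _ => 1) 1 measurable_const fun y => by simpa using hV1 y
  have hkernel (t : ℝ) (ht : t ∈ Icc (0 : ℝ) 1) :
      hastingsKernelFun lam g q (mixtureDensity pμ pν t) x f = f x + ∫ y, (f y - f x) *
        g (hastingsRatio q (mixtureDensity pμ pν t) x y) * q x y ∂lam :=
    hastingsKernelFun_eq_add_integral hg (fun u hu => (hg' u hu).continuousAt) hqm hqpos hcq
      (measurable_mixtureDensity hpμm hpνm t) (mixtureDensity_pos hpμpos hpνpos ht) hfm
      (hfint.1.mul_mixtureDensity hfint.2 t) (by simpa using h1.1.mul_mixtureDensity h1.2 t)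
  rw [← integral_mul_deriv_hastingsRatio_mixtureDensity_eq hg' hcg hqm hqpos hcq hpμm hpμpos
    hfint.1 hfint.2 x]
  refine ((hasDerivWithinAt_integral_mul_g_hastingsRatio_mixtureDensity hg hg' hcg hqm hqpos hcq
    hpμm hpνm hpμpos hpνpos (hfm.sub_const _) hfint.1 hfint.2 x).const_add
    (f x)).congr_of_eventuallyEq ?_ (hkernel 0 ⟨le_rfl, zero_le_one⟩)
  filter_upwards [Icc_mem_nhdsGE one_pos] with t ht using hkernel t ht

/-- **Derivative in the invariant distribution of Hastings kernels (point-mass case).**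
Under the same assumptions on `g`, `q`, `μ = pμ·λ`, `ν = pν·λ` as in the density case,
for fixed `x` and `f` with `‖f‖_V < ∞`, the map `t ↦ P_{μ_t}(x, f)` has right derivative
at `t = 0` equal to
`∫ (pν(y)-pμ(y)) (f(y)-f(x)) g'(r_μ(x,y)) q(y,x) / pμ(x) λ(dy)
  - (pν(x)-pμ(x)) (1/pμ(x)²) ∫ (f(z)-f(x)) q(z,x) g'(r_μ(x,z)) pμ(z) λ(dz)`,
exhibiting the density part and the singular part of the derivative. -/
theorem stmt_6 {X : Type*} [MeasurableSpace X]
    (lam : Measure X) [SigmaFinite lam]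
    (V : X → ℝ) (hVm : Measurable V) (hV1 : ∀ x, 1 ≤ V x)
    (g g' g'' : ℝ → ℝ)
    (hgpos : ∀ u : ℝ, 0 < u → 0 < g u ∧ g u ≤ 1)
    (hgbal : ∀ u : ℝ, 0 < u → g u = u * g (1 / u))
    (hgmono : MonotoneOn g (Set.Ioi 0))
    (hg' : ∀ u : ℝ, 0 < u → HasDerivAt g (g' u) u)
    (hg'' : ∀ u : ℝ, 0 < u → HasDerivAt g' (g'' u) u)
    (hg'b : ∃ c, ∀ u : ℝ, 0 < u → |g' u| ≤ c)
    (hg''b : ∃ c, ∀ u : ℝ, 0 < u → |g'' u| ≤ c)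
    (q : X → X → ℝ) (hqm : Measurable (Function.uncurry q))
    (hqpos : ∀ x y, 0 < q x y) (hqb : ∃ c, ∀ x y, q x y ≤ c)
    (hqint : ∀ x, ∫ y, q x y ∂lam = 1)
    (pμ pν : X → ℝ) (hpμm : Measurable pμ) (hpνm : Measurable pν)
    (hpμpos : ∀ x, 0 < pμ x) (hpνpos : ∀ x, 0 < pν x)
    (hpμb : ∃ c, ∀ x, pμ x ≤ c) (hpνb : ∃ c, ∀ x, pν x ≤ c)
    (hμprob : IsProbabilityMeasure (lam.withDensity fun x => ENNReal.ofReal (pμ x)))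
    (hνprob : IsProbabilityMeasure (lam.withDensity fun x => ENNReal.ofReal (pν x)))
    (hVμ : Integrable (fun x => V x * pμ x) lam)
    (hVν : Integrable (fun x => V x * pν x) lam)
    (x : X)
    (f : X → ℝ) (hfm : Measurable f) (hfV : ∃ c, ∀ y, |f y| ≤ c * V y) :
    HasDerivWithinAt
      (fun t => hastingsKernelFun lam g q (fun y => (1 - t) * pμ y + t * pν y) x f)
      ((∫ y, (pν y - pμ y) * (f y - f x) * g' (hastingsRatio q pμ x y) * q y x / pμ x ∂lam)
        - (pν x - pμ x) * (1 / pμ x ^ 2) *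
            ∫ z, (f z - f x) * q z x * g' (hastingsRatio q pμ x z) * pμ z ∂lam)
      (Set.Ici 0) 0 :=
  stmt_6_general lam V hV1 g g' hgpos hgbal hg' hg'b q hqm hqpos hqb pμ pν hpμm hpνm hpμpos hpνpos
    hVμ hVν x f hfm hfV
end

section
/- Let X be a measurable space equipped with a sigma-finite measure lambda, V : X -> [1,infinity) measurable, q a bounded positive proposal density, and let mu, nu be probability measures with everywhere positive bounded densities with respect to lambda satisfying ∫ V dmu < infinity and ∫ V dnu < infinity. Let rho be a probability measure with density such that sup_x rho(x)/mu(x)^2 < infinity and sup_x rho(x)/nu(x)^2 < infinity. Then, with P_mu, P_nu the Metropolis-Hastings kernels with invariant distributions mu, nu (the Hastings kernels with balancing function g(u) = min(1,u)): sup over measurable f with ||f||_V <= 1 of |P_mu(rho,f) - P_nu(rho,f)| is at most M_rho * ||mu - nu||_V, where M_rho := ∫_0^1 { ∫ sup_y [ (V(y)+V(z)) (rho(z)/mu_t(z)) q(y,z) / V(y) ] lambda(dz) + ∫ sup_y [ (V(y)+V(z)) mu_t(z) q(z,y) rho(y) / (mu_t(y)^2 V(y)) ] lambda(dz) } dt.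 -/
open MeasureTheory ProbabilityTheory ENNReal

/-- The Metropolis–Hastings kernel (Hastings kernel with balancing function
`g(u) = min 1 u`), with proposal density `q` and invariant density `p`. -/
noncomputable def mhKernelFun {X : Type*} [MeasurableSpace X] (lam : Measure X)
    (q : X → X → ℝ) (p : X → ℝ) (x : X) (f : X → ℝ) : ℝ :=
  (∫ y, f y * min 1 (hastingsRatio q p x y) * q x y ∂lam)
    + f x * (1 - ∫ y, min 1 (hastingsRatio q p x y) * q x y ∂lam)

/-- The `V`-norm `‖μ - ν‖_V = sup { |∫ f dμ - ∫ f dν| : f measurable, ‖f‖_V ≤ 1 }`. -/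
noncomputable def vDistE {X : Type*} [MeasurableSpace X] (V : X → ℝ) (μ ν : Measure X) :
    ℝ≥0∞ :=
  ⨆ f : {f : X → ℝ // Measurable f ∧ ∀ x, |f x| ≤ V x},
    ENNReal.ofReal |(∫ x, f.1 x ∂μ) - ∫ x, f.1 x ∂ν|

/-!
Write `a_p(x,y) = min (q(x,y), p(y) q(y,x) / p(x))` for the density of accepted moves. Then
`P_μ(x,f) - P_ν(x,f) = ∫ (f y - f x) (a_μ - a_ν)(x,y) λ(dy)`, and since `min (q, ·)` is
1-Lipschitz, `|a_μ - a_ν| ≤ q(y,x) |ν(y)/ν(x) - μ(y)/μ(x)|`. The ratio difference is the integral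
over `t ∈ [0,1]` of the derivative of `μ_t(y)/μ_t(x)`, which is at most
`|ν(y) - μ(y)| / μ_t(x) + μ_t(y) |ν(x) - μ(x)| / μ_t(x)²`. After Tonelli, for fixed `t` each of
the two terms is bounded by a supremum over one variable times `V(z) |ν(z) - μ(z)|` in the other,
and `∫ V |ν - μ| dλ = ∫ f₀ dμ - ∫ f₀ dν ≤ ‖μ - ν‖_V` for the test function `f₀ = ± V`.
-/

lemma hasDerivAt_affine_div_affine (pa pb qa qb t : ℝ) (ht : (1 - t) * pa + t * qa ≠ 0) :
    HasDerivAt (fun u => ((1 - u) * pb + u * qb) / ((1 - u) * pa + u * qa))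
      (((qb - pb) * ((1 - t) * pa + t * qa) - ((1 - t) * pb + t * qb) * (qa - pa))
        / ((1 - t) * pa + t * qa) ^ 2) t := by
  have haffine : ∀ a b : ℝ, HasDerivAt (fun u => (1 - u) * a + u * b) (b - a) t := fun a b =>
    ((((hasDerivAt_id t).const_sub 1).mul_const a).add
      ((hasDerivAt_id t).mul_const b)).congr_deriv (by ring)
  exact (haffine pb qb).div (haffine pa qa) ht

-- The fundamental theorem of calculus for `t ↦ ((1 - t) pb + t qb) / ((1 - t) pa + t qa)`.
lemma ofReal_abs_div_sub_div_le_lintegral {pa pb qa qb : ℝ} (hpa : 0 < pa) (hqa : 0 < qa)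
    (hpb : 0 ≤ pb) (hqb : 0 ≤ qb) :
    ENNReal.ofReal |qb / qa - pb / pa| ≤ ∫⁻ t in Set.Icc (0 : ℝ) 1,
      ENNReal.ofReal (|qb - pb| / ((1 - t) * pa + t * qa)
        + ((1 - t) * pb + t * qb) * |qa - pa| / ((1 - t) * pa + t * qa) ^ 2) := by
  set A : ℝ → ℝ := fun t => (1 - t) * pb + t * qb
  set B : ℝ → ℝ := fun t => (1 - t) * pa + t * qa
  set D : ℝ → ℝ := fun t => ((qb - pb) * B t - A t * (qa - pa)) / B t ^ 2
  have hB : ∀ t ∈ Set.Icc (0 : ℝ) 1, 0 < B t := fun t ht => by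
    rcases eq_or_lt_of_le ht.2 with rfl | ht1
    · simpa [B] using hqa
    · have := mul_pos (sub_pos.2 ht1) hpa
      have := mul_nonneg ht.1 hqa.le
      simp only [B]; linarith
  have hA : ∀ t ∈ Set.Icc (0 : ℝ) 1, 0 ≤ A t := fun t ht =>
    add_nonneg (mul_nonneg (sub_nonneg.2 ht.2) hpb) (mul_nonneg ht.1 hqb)
  have hderiv : ∀ t ∈ Set.uIcc (0 : ℝ) 1, HasDerivAt (fun u => A u / B u) (D t) t := by
    intro t ht
    rw [Set.uIcc_of_le zero_le_one] at ht
    exact hasDerivAt_affine_div_affine pa pb qa qb t (hB t ht).ne'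
  have hD : IntervalIntegrable D volume 0 1 := by
    refine ContinuousOn.intervalIntegrable ?_
    rw [Set.uIcc_of_le zero_le_one]
    exact ContinuousOn.div (by fun_prop) (by fun_prop) fun t ht => (pow_pos (hB t ht) 2).ne'
  have hftc : ∫ t in Set.Ioc (0 : ℝ) 1, D t = qb / qa - pb / pa := by
    rw [← intervalIntegral.integral_of_le zero_le_one,
      intervalIntegral.integral_eq_sub_of_hasDerivAt hderiv hD]
    simp [A, B]
  have hDle : ∀ t ∈ Set.Ioc (0 : ℝ) 1,
      |D t| ≤ |qb - pb| / B t + A t * |qa - pa| / B t ^ 2 := fun t ht => by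
    have hBt := hB t (Set.Ioc_subset_Icc_self ht)
    have hAt := hA t (Set.Ioc_subset_Icc_self ht)
    calc |D t| = |(qb - pb) * B t - A t * (qa - pa)| / B t ^ 2 := by
          rw [abs_div, abs_of_pos (pow_pos hBt 2)]
      _ ≤ (|qb - pb| * B t + A t * |qa - pa|) / B t ^ 2 := by
          gcongr
          refine (abs_sub _ _).trans_eq ?_
          rw [abs_mul, abs_mul, abs_of_pos hBt, abs_of_nonneg hAt]
      _ = |qb - pb| / B t + A t * |qa - pa| / B t ^ 2 := by field_simp
  calc ENNReal.ofReal |qb / qa - pb / pa| = ‖∫ t in Set.Ioc (0 : ℝ) 1, D t‖ₑ := by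
        rw [hftc, Real.enorm_eq_ofReal_abs]
    _ ≤ ∫⁻ t in Set.Ioc (0 : ℝ) 1, ‖D t‖ₑ := enorm_integral_le_lintegral_enorm _
    _ ≤ ∫⁻ t in Set.Ioc (0 : ℝ) 1,
          ENNReal.ofReal (|qb - pb| / B t + A t * |qa - pa| / B t ^ 2) := by
        refine setLIntegral_mono' measurableSet_Ioc fun t ht => ?_
        rw [Real.enorm_eq_ofReal_abs]
        exact ENNReal.ofReal_le_ofReal (hDle t ht)
    _ ≤ _ := lintegral_mono_set Set.Ioc_subset_Icc_self

lemma ofReal_mhIntegrand_le {X : Type*} {q : X → X → ℝ} {pμ pν pρ V : X → ℝ}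
    (hV1 : ∀ x, 1 ≤ V x) (hq : ∀ x y, 0 ≤ q x y)
    (hpμ : ∀ x, 0 ≤ pμ x) (hpν : ∀ x, 0 ≤ pν x) (hpρ : ∀ x, 0 ≤ pρ x)
    {t : ℝ} (ht : t ∈ Set.Icc (0 : ℝ) 1) (x y : X) :
    ENNReal.ofReal (pρ x * ((V x + V y) * q y x) *
        (|pν y - pμ y| / ((1 - t) * pμ x + t * pν x)
          + ((1 - t) * pμ y + t * pν y) * |pν x - pμ x| / ((1 - t) * pμ x + t * pν x) ^ 2))
      ≤ (⨆ y', ENNReal.ofReal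
            ((V y' + V x) * (pρ x / ((1 - t) * pμ x + t * pν x)) * q y' x / V y'))
          * ENNReal.ofReal (V y * |pν y - pμ y|)
        + ENNReal.ofReal (V x * |pν x - pμ x|)
          * ⨆ x', ENNReal.ofReal ((V x' + V y) * ((1 - t) * pμ y + t * pν y) * q y x' * pρ x' /
              (((1 - t) * pμ x' + t * pν x') ^ 2 * V x')) := by
  set P : X → ℝ := fun z => (1 - t) * pμ z + t * pν z
  have hP : ∀ z, 0 ≤ P z := fun z =>
    add_nonneg (mul_nonneg (sub_nonneg.2 ht.2) (hpμ z)) (mul_nonneg ht.1 (hpν z))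
  have hV : ∀ z, 0 < V z := fun z => zero_lt_one.trans_le (hV1 z)
  have hC : 0 ≤ pρ x * ((V x + V y) * q y x) :=
    mul_nonneg (hpρ x) (mul_nonneg (add_nonneg (hV x).le (hV y).le) (hq y x))
  have hsplit₁ : pρ x * ((V x + V y) * q y x) * (|pν y - pμ y| / P x)
      = (V y + V x) * (pρ x / P x) * q y x / V y * (V y * |pν y - pμ y|) := by
    field_simp [(hV y).ne']; ring
  have hsplit₂ : pρ x * ((V x + V y) * q y x) * (P y * |pν x - pμ x| / P x ^ 2)
      = V x * |pν x - pμ x| * ((V x + V y) * P y * q y x * pρ x / (P x ^ 2 * V x)) := by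
    field_simp [(hV x).ne']
  rw [mul_add, ENNReal.ofReal_add (mul_nonneg hC (div_nonneg (abs_nonneg _) (hP x)))
    (mul_nonneg hC (div_nonneg (mul_nonneg (hP y) (abs_nonneg _)) (sq_nonneg _))),
    hsplit₁, hsplit₂, ENNReal.ofReal_mul' (mul_nonneg (hV y).le (abs_nonneg _)),
    ENNReal.ofReal_mul (mul_nonneg (hV x).le (abs_nonneg _))]
  exact add_le_add (mul_le_mul_left (le_iSup (fun y' => ENNReal.ofReal
      ((V y' + V x) * (pρ x / P x) * q y' x / V y')) y) _)
    (mul_le_mul_right (le_iSup (fun x' => ENNReal.ofReal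
      ((V x' + V y) * P y * q y x' * pρ x' / (P x' ^ 2 * V x'))) x) _)

lemma lintegral_lintegral_lintegral_swap {α β γ : Type*} [MeasurableSpace α]
    [MeasurableSpace β] [MeasurableSpace γ] {μ : Measure α} {ν : Measure β} {κ : Measure γ}
    [SFinite μ] [SFinite ν] [SFinite κ] {F : α → β → γ → ℝ≥0∞}
    (hF : Measurable fun p : (α × β) × γ => F p.1.1 p.1.2 p.2) :
    ∫⁻ x, ∫⁻ y, ∫⁻ t, F x y t ∂κ ∂ν ∂μ = ∫⁻ t, ∫⁻ x, ∫⁻ y, F x y t ∂ν ∂μ ∂κ := by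
  have hinner : ∀ x, ∫⁻ y, ∫⁻ t, F x y t ∂κ ∂ν = ∫⁻ t, ∫⁻ y, F x y t ∂ν ∂κ := fun x =>
    lintegral_lintegral_swap (hF.comp (measurable_const.prodMk measurable_fst |>.prodMk
      measurable_snd)).aemeasurable
  simp only [hinner]
  exact lintegral_lintegral_swap (Measurable.lintegral_prod_right'
    (f := fun p : (α × γ) × β => F p.1.1 p.2 p.1.2)
    (hF.comp ((measurable_fst.fst.prodMk measurable_snd).prodMk measurable_fst.snd))).aemeasurable

lemma lintegral_lintegral_le_of_le_mul_add_mul {α : Type*} [MeasurableSpace α] {μ : Measure α}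
    {F : α → α → ℝ≥0∞} {S T w : α → ℝ≥0∞} (hw : Measurable w) (hw_ne_top : ∀ x, w x ≠ ⊤)
    (hw_fin : ∫⁻ x, w x ∂μ ≠ ⊤)
    (hF : ∀ x y, F x y ≤ S x * w y + w x * T y) :
    ∫⁻ x, ∫⁻ y, F x y ∂μ ∂μ ≤ (∫⁻ x, S x ∂μ + ∫⁻ x, T x ∂μ) * ∫⁻ x, w x ∂μ :=
  calc ∫⁻ x, ∫⁻ y, F x y ∂μ ∂μ ≤ ∫⁻ x, ∫⁻ y, (S x * w y + w x * T y) ∂μ ∂μ :=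
        lintegral_mono fun x => lintegral_mono fun y => hF x y
    _ = ∫⁻ x, (S x * ∫⁻ y, w y ∂μ + w x * ∫⁻ y, T y ∂μ) ∂μ := by
        congr 1; funext x
        rw [lintegral_add_left (hw.const_mul _), lintegral_const_mul _ hw,
          lintegral_const_mul' _ _ (hw_ne_top x)]
    _ = (∫⁻ x, S x ∂μ + ∫⁻ x, T x ∂μ) * ∫⁻ x, w x ∂μ := by
        rw [lintegral_add_right _ (hw.mul_const _), lintegral_mul_const' _ _ hw_fin,
          lintegral_mul_const _ hw]
        ring

section JumpDensity

variable {X : Type*} {q : X → X → ℝ} {p V f : X → ℝ}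

noncomputable def mhJumpDensity (q : X → X → ℝ) (p : X → ℝ) (x y : X) : ℝ :=
  min (q x y) (p y * q y x / p x)

lemma min_one_hastingsRatio_mul {x y : X} (hq : 0 < q x y) :
    min 1 (hastingsRatio q p x y) * q x y = mhJumpDensity q p x y := by
  rw [min_mul_of_nonneg _ _ hq.le, one_mul, hastingsRatio, mhJumpDensity]
  congr 1
  field_simp

lemma mhJumpDensity_nonneg (hq : ∀ x y, 0 ≤ q x y) (hp : ∀ x, 0 ≤ p x) (x y : X) :
    0 ≤ mhJumpDensity q p x y :=
  le_min (hq x y) (div_nonneg (mul_nonneg (hp y) (hq y x)) (hp x))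

lemma mul_mhJumpDensity_le {cq : ℝ} (hcq : ∀ x y, q x y ≤ cq) (hp : ∀ x, 0 ≤ p x)
    (hV : ∀ x, 0 ≤ V x) (x y : X) :
    V y * mhJumpDensity q p x y ≤ cq / p x * (V y * p y) :=
  calc V y * mhJumpDensity q p x y ≤ V y * (p y * q y x / p x) :=
        mul_le_mul_of_nonneg_left (min_le_right _ _) (hV y)
    _ = q y x * (V y * p y) / p x := by ring
    _ ≤ cq * (V y * p y) / p x := by gcongr; exacts [hp x, mul_nonneg (hV y) (hp y), hcq y x]
    _ = cq / p x * (V y * p y) := by ring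

lemma abs_mhJumpDensity_sub_le {pμ pν : X → ℝ} (hq : ∀ x y, 0 ≤ q x y) (x y : X) :
    |mhJumpDensity q pμ x y - mhJumpDensity q pν x y|
      ≤ q y x * |pν y / pν x - pμ y / pμ x| := by
  have hμ : pμ y * q y x / pμ x = pμ y / pμ x * q y x := by ring
  have hν : pν y * q y x / pν x = pν y / pν x * q y x := by ring
  calc |mhJumpDensity q pμ x y - mhJumpDensity q pν x y|
      ≤ max |q x y - q x y| |pμ y / pμ x * q y x - pν y / pν x * q y x| := by
        rw [mhJumpDensity, mhJumpDensity, hμ, hν]; exact abs_min_sub_min_le_max _ _ _ _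
    _ = q y x * |pν y / pν x - pμ y / pμ x| := by
        rw [sub_self, abs_zero, max_eq_right (abs_nonneg _), ← sub_mul, abs_mul, abs_sub_comm,
          abs_of_nonneg (hq y x), mul_comm]

variable [MeasurableSpace X] {lam : Measure X}

lemma mhKernelFun_eq (hq : ∀ x y, 0 < q x y) (x : X) (f : X → ℝ) :
    mhKernelFun lam q p x f = (∫ y, f y * mhJumpDensity q p x y ∂lam)
      + f x * (1 - ∫ y, mhJumpDensity q p x y ∂lam) := by
  simp only [mhKernelFun, mul_assoc, min_one_hastingsRatio_mul (hq x _)]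

lemma measurable_mhJumpDensity (hqm : Measurable (Function.uncurry q)) (hpm : Measurable p) :
    Measurable (Function.uncurry (mhJumpDensity q p)) :=
  hqm.min (((hpm.comp measurable_snd).mul (hqm.comp measurable_swap)).div
    (hpm.comp measurable_fst))

variable (hqm : Measurable (Function.uncurry q)) (hpm : Measurable p) (hp : ∀ x, 0 ≤ p x)
include hqm hpm hp

lemma integrable_mhJumpDensity (hq : ∀ x y, 0 ≤ q x y) (hqi : ∀ x, Integrable (q x) lam)
    (x : X) : Integrable (mhJumpDensity q p x) lam :=
  (hqi x).mono' (measurable_mhJumpDensity hqm hpm).of_uncurry_left.aestronglyMeasurable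
    (.of_forall fun y => by
      rw [Real.norm_eq_abs, abs_of_nonneg (mhJumpDensity_nonneg hq hp x y)]
      exact min_le_left _ _)

lemma integrable_mul_mhJumpDensity (hq : ∀ x y, 0 ≤ q x y) {cq : ℝ} (hcq : ∀ x y, q x y ≤ cq)
    (hfm : Measurable f) (hf : ∀ x, |f x| ≤ V x) (hVp : Integrable (fun x => V x * p x) lam)
    (x : X) :
    Integrable (fun y => f y * mhJumpDensity q p x y) lam :=
  (hVp.const_mul (cq / p x)).mono'
    (hfm.mul (measurable_mhJumpDensity hqm hpm).of_uncurry_left).aestronglyMeasurable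
    (.of_forall fun y => by
      rw [Real.norm_eq_abs, abs_mul, abs_of_nonneg (mhJumpDensity_nonneg hq hp x y)]
      exact (mul_le_mul_of_nonneg_right (hf y) (mhJumpDensity_nonneg hq hp x y)).trans
        (mul_mhJumpDensity_le hcq hp (fun z => (abs_nonneg _).trans (hf z)) x y))

lemma abs_mhKernelFun_le (hq : ∀ x y, 0 < q x y) {cq : ℝ} (hcq : ∀ x y, q x y ≤ cq)
    (hqint : ∀ x, ∫ y, q x y ∂lam = 1) (hf : ∀ x, |f x| ≤ V x)
    (hVp : Integrable (fun x => V x * p x) lam) (x : X) :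
    |mhKernelFun lam q p x f| ≤ cq * (∫ z, V z * p z ∂lam) / p x + V x := by
  have hq0 : ∀ x y, 0 ≤ q x y := fun x y => (hq x y).le
  have hV : ∀ x, 0 ≤ V x := fun z => (abs_nonneg _).trans (hf z)
  have hqi : ∀ x, Integrable (q x) lam := fun x => .of_integral_ne_zero (by simp [hqint x])
  have ha0 := mhJumpDensity_nonneg hq0 hp x
  have hint_le : ∫ y, mhJumpDensity q p x y ∂lam ≤ 1 := by
    rw [← hqint x]
    exact integral_mono (integrable_mhJumpDensity hqm hpm hp hq0 hqi x) (hqi x)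
      fun y => min_le_left _ _
  have hjump : |∫ y, f y * mhJumpDensity q p x y ∂lam| ≤ cq * (∫ z, V z * p z ∂lam) / p x := by
    refine (abs_integral_le_integral_abs).trans ?_
    calc ∫ y, |f y * mhJumpDensity q p x y| ∂lam ≤ ∫ y, cq / p x * (V y * p y) ∂lam := by
          refine integral_mono_of_nonneg (.of_forall fun _ => abs_nonneg _)
            (hVp.const_mul _) (.of_forall fun y => ?_)
          dsimp only
          rw [abs_mul, abs_of_nonneg (ha0 y)]
          exact (mul_le_mul_of_nonneg_right (hf y) (ha0 y)).trans
            (mul_mhJumpDensity_le hcq hp hV x y)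
      _ = cq * (∫ z, V z * p z ∂lam) / p x := by rw [integral_const_mul]; ring
  have hstay : |f x * (1 - ∫ y, mhJumpDensity q p x y ∂lam)| ≤ V x := by
    rw [abs_mul, abs_of_nonneg (sub_nonneg.2 hint_le)]
    have hint_nonneg : 0 ≤ ∫ y, mhJumpDensity q p x y ∂lam := integral_nonneg ha0
    exact (mul_le_mul_of_nonneg_right (hf x) (sub_nonneg.2 hint_le)).trans
      (mul_le_of_le_one_right (hV x) (by linarith))
  rw [mhKernelFun_eq hq]
  exact (abs_add_le _ _).trans (add_le_add hjump hstay)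

omit hp in
lemma measurable_mhKernelFun [SFinite lam] (hfm : Measurable f) :
    Measurable fun x => mhKernelFun lam q p x f := by
  have hr : Measurable fun xy : X × X => min 1 (hastingsRatio q p xy.1 xy.2) * q xy.1 xy.2 :=
    (measurable_const.min (((hpm.comp measurable_snd).mul (hqm.comp measurable_swap)).div
      ((hpm.comp measurable_fst).mul hqm))).mul hqm
  have hjump : Measurable fun x =>
      ∫ y, f y * (min 1 (hastingsRatio q p x y) * q x y) ∂lam :=
    (StronglyMeasurable.integral_prod_right' (f := fun xy : X × X =>
      f xy.2 * (min 1 (hastingsRatio q p xy.1 xy.2) * q xy.1 xy.2))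
      ((hfm.comp measurable_snd).mul hr).stronglyMeasurable).measurable
  have hmass : Measurable fun x => ∫ y, min 1 (hastingsRatio q p x y) * q x y ∂lam :=
    (StronglyMeasurable.integral_prod_right' (f := fun xy : X × X =>
      min 1 (hastingsRatio q p xy.1 xy.2) * q xy.1 xy.2) hr.stronglyMeasurable).measurable
  simp only [mhKernelFun, mul_assoc]
  exact hjump.add (hfm.mul (measurable_const.sub hmass))

lemma integrable_mhKernelFun_withDensity [SFinite lam] (hq : ∀ x y, 0 < q x y) {cq : ℝ}
    (hcq : ∀ x y, q x y ≤ cq) (hqint : ∀ x, ∫ y, q x y ∂lam = 1) (hfm : Measurable f)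
    (hf : ∀ x, |f x| ≤ V x) (hV1 : ∀ x, 1 ≤ V x) (hVp : Integrable (fun x => V x * p x) lam)
    {pρ : X → ℝ} (hpρm : Measurable pρ) (hpρ : ∀ x, 0 ≤ pρ x) {c cp : ℝ}
    (hρp : ∀ x, pρ x ≤ c * p x ^ 2) (hpb : ∀ x, p x ≤ cp) :
    Integrable (fun x => mhKernelFun lam q p x f)
      (lam.withDensity fun x => ENNReal.ofReal (pρ x)) := by
  set I := ∫ z, V z * p z ∂lam
  have hI : 0 ≤ I := integral_nonneg fun z => mul_nonneg (zero_le_one.trans (hV1 z)) (hp z)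
  have hp_int : Integrable p lam := hVp.mono' hpm.aestronglyMeasurable (.of_forall fun x => by
    rw [Real.norm_eq_abs, abs_of_nonneg (hp x)]
    exact le_mul_of_one_le_left (hp x) (hV1 x))
  rw [integrable_withDensity_iff hpρm.ennreal_ofReal (.of_forall fun _ => ENNReal.ofReal_lt_top)]
  refine ((hp_int.const_mul (cq * I * |c|)).add (hVp.const_mul (|c| * cp))).mono'
    ((measurable_mhKernelFun hqm hpm hfm).mul
      hpρm.ennreal_ofReal.ennreal_toReal).aestronglyMeasurable (.of_forall fun x => ?_)
  have hρp' : pρ x ≤ |c| * p x * p x := by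
    nlinarith [hρp x, le_abs_self c, sq_nonneg (p x)]
  have hcqI : 0 ≤ cq * I := mul_nonneg ((hq x x).le.trans (hcq x x)) hI
  rw [ENNReal.toReal_ofReal (hpρ x), Real.norm_eq_abs, abs_mul, abs_of_nonneg (hpρ x)]
  calc |mhKernelFun lam q p x f| * pρ x ≤ (cq * I / p x + V x) * pρ x :=
        mul_le_mul_of_nonneg_right
          (abs_mhKernelFun_le hqm hpm hp hq hcq hqint hf hVp x) (hpρ x)
    _ = cq * I * (pρ x / p x) + V x * pρ x := by ring
    _ ≤ cq * I * (|c| * p x) + V x * (|c| * cp * p x) := by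
        gcongr
        · exact div_le_of_le_mul₀ (hp x) (mul_nonneg (abs_nonneg c) (hp x)) hρp'
        · exact zero_le_one.trans (hV1 x)
        · exact hρp'.trans (by gcongr; exacts [hp x, hpb x])
    _ = cq * I * |c| * p x + |c| * cp * (V x * p x) := by ring

end JumpDensity

section KernelDifference

variable {X : Type*} [MeasurableSpace X] {lam : Measure X} {q : X → X → ℝ} {pμ pν V f : X → ℝ}

lemma mhKernelFun_sub_mhKernelFun (hqm : Measurable (Function.uncurry q))
    (hq : ∀ x y, 0 < q x y) {cq : ℝ} (hcq : ∀ x y, q x y ≤ cq)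
    (hqint : ∀ x, ∫ y, q x y ∂lam = 1) (hfm : Measurable f) (hf : ∀ x, |f x| ≤ V x)
    (hpμm : Measurable pμ) (hpνm : Measurable pν) (hpμ : ∀ x, 0 ≤ pμ x) (hpν : ∀ x, 0 ≤ pν x)
    (hVμ : Integrable (fun x => V x * pμ x) lam) (hVν : Integrable (fun x => V x * pν x) lam)
    (x : X) :
    mhKernelFun lam q pμ x f - mhKernelFun lam q pν x f
      = ∫ y, (f y - f x) * (mhJumpDensity q pμ x y - mhJumpDensity q pν x y) ∂lam := by
  have hq0 : ∀ x y, 0 ≤ q x y := fun x y => (hq x y).le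
  have hqi : ∀ x, Integrable (q x) lam := fun x => .of_integral_ne_zero (by simp [hqint x])
  have hfaμ := integrable_mul_mhJumpDensity hqm hpμm hpμ hq0 hcq hfm hf hVμ x
  have hfaν := integrable_mul_mhJumpDensity hqm hpνm hpν hq0 hcq hfm hf hVν x
  have haμ := (integrable_mhJumpDensity hqm hpμm hpμ hq0 hqi x).const_mul (f x)
  have haν := (integrable_mhJumpDensity hqm hpνm hpν hq0 hqi x).const_mul (f x)
  have hexpand : ∀ y, (f y - f x) * (mhJumpDensity q pμ x y - mhJumpDensity q pν x y)
      = (f y * mhJumpDensity q pμ x y - f y * mhJumpDensity q pν x y)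
        - (f x * mhJumpDensity q pμ x y - f x * mhJumpDensity q pν x y) := fun y => by ring
  simp only [mhKernelFun_eq hq, hexpand]
  have hfa : Integrable (fun y => f y * mhJumpDensity q pμ x y - f y * mhJumpDensity q pν x y)
      lam := hfaμ.sub hfaν
  have ha : Integrable (fun y => f x * mhJumpDensity q pμ x y - f x * mhJumpDensity q pν x y)
      lam := haμ.sub haν
  rw [integral_sub hfa ha, integral_sub hfaμ hfaν, integral_sub haμ haν,
    integral_const_mul, integral_const_mul]
  ring

lemma enorm_mhKernelFun_sub_le (hqm : Measurable (Function.uncurry q))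
    (hq : ∀ x y, 0 < q x y) {cq : ℝ} (hcq : ∀ x y, q x y ≤ cq)
    (hqint : ∀ x, ∫ y, q x y ∂lam = 1) (hfm : Measurable f) (hf : ∀ x, |f x| ≤ V x)
    (hpμm : Measurable pμ) (hpνm : Measurable pν) (hpμ : ∀ x, 0 ≤ pμ x) (hpν : ∀ x, 0 ≤ pν x)
    (hVμ : Integrable (fun x => V x * pμ x) lam) (hVν : Integrable (fun x => V x * pν x) lam)
    (x : X) :
    ‖mhKernelFun lam q pμ x f - mhKernelFun lam q pν x f‖ₑ
      ≤ ∫⁻ y, ENNReal.ofReal ((V x + V y) * q y x * |pν y / pν x - pμ y / pμ x|) ∂lam := by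
  rw [mhKernelFun_sub_mhKernelFun hqm hq hcq hqint hfm hf hpμm hpνm hpμ hpν hVμ hVν]
  refine (enorm_integral_le_lintegral_enorm _).trans (lintegral_mono fun y => ?_)
  have hfxy : |f y - f x| ≤ V x + V y := (abs_sub _ _).trans (by linarith [hf x, hf y])
  rw [Real.enorm_eq_ofReal_abs, abs_mul, mul_assoc]
  exact ENNReal.ofReal_le_ofReal (mul_le_mul hfxy
    (abs_mhJumpDensity_sub_le (fun x y => (hq x y).le) x y) (abs_nonneg _)
    ((abs_nonneg _).trans hfxy))

end KernelDifference

section Lipschitz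

variable {X : Type*} [MeasurableSpace X] {lam : Measure X} {q : X → X → ℝ} {pμ pν pρ V f : X → ℝ}

lemma integral_withDensity_ofReal {p g : X → ℝ} (hpm : Measurable p) (hp : ∀ x, 0 ≤ p x) :
    ∫ x, g x ∂lam.withDensity (fun x => ENNReal.ofReal (p x)) = ∫ x, p x * g x ∂lam := by
  rw [integral_withDensity_eq_integral_toReal_smul hpm.ennreal_ofReal
    (.of_forall fun _ => ENNReal.ofReal_lt_top)]
  simp only [ENNReal.toReal_ofReal (hp _), smul_eq_mul]

lemma ofReal_abs_integral_sub_le_lintegral_withDensity {g h : X → ℝ} (hpρm : Measurable pρ)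
    (hg : Integrable g (lam.withDensity fun x => ENNReal.ofReal (pρ x)))
    (hh : Integrable h (lam.withDensity fun x => ENNReal.ofReal (pρ x))) :
    ENNReal.ofReal |(∫ x, g x ∂lam.withDensity fun x => ENNReal.ofReal (pρ x))
        - ∫ x, h x ∂lam.withDensity fun x => ENNReal.ofReal (pρ x)|
      ≤ ∫⁻ x, ENNReal.ofReal (pρ x) * ‖g x - h x‖ₑ ∂lam := by
  rw [← integral_sub hg hh, ← Real.enorm_eq_ofReal_abs]
  exact (enorm_integral_le_lintegral_enorm _).trans
    (lintegral_withDensity_le_lintegral_mul _ hpρm.ennreal_ofReal _)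

lemma integrable_mul_abs_sub (hV : ∀ x, 0 ≤ V x) (hVμ : Integrable (fun x => V x * pμ x) lam)
    (hVν : Integrable (fun x => V x * pν x) lam) :
    Integrable (fun x => V x * |pν x - pμ x|) lam :=
  (hVν.sub hVμ).abs.congr (.of_forall fun x => by
    simp only [Pi.sub_apply, ← mul_sub, abs_mul, abs_of_nonneg (hV x)])

lemma lintegral_ofReal_mul_abs_sub_le_vDistE (hVm : Measurable V) (hV : ∀ x, 0 ≤ V x)
    (hpμm : Measurable pμ) (hpνm : Measurable pν) (hpμ : ∀ x, 0 ≤ pμ x) (hpν : ∀ x, 0 ≤ pν x)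
    (hVμ : Integrable (fun x => V x * pμ x) lam) (hVν : Integrable (fun x => V x * pν x) lam) :
    ∫⁻ x, ENNReal.ofReal (V x * |pν x - pμ x|) ∂lam
      ≤ vDistE V (lam.withDensity fun x => ENNReal.ofReal (pμ x))
          (lam.withDensity fun x => ENNReal.ofReal (pν x)) := by
  set g : X → ℝ := fun x => if pν x ≤ pμ x then V x else -V x
  have hgm : Measurable g := Measurable.ite (measurableSet_le hpνm hpμm) hVm hVm.neg
  have hgV : ∀ x, |g x| ≤ V x := fun x => by
    simp only [g]; split_ifs <;> simp [abs_of_nonneg (hV x)]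
  have hμg : Integrable (fun x => pμ x * g x) lam :=
    hVμ.mono' (hpμm.mul hgm).aestronglyMeasurable (.of_forall fun x => by
      rw [norm_mul, Real.norm_of_nonneg (hpμ x), mul_comm]
      exact mul_le_mul_of_nonneg_right (hgV x) (hpμ x))
  have hνg : Integrable (fun x => pν x * g x) lam :=
    hVν.mono' (hpνm.mul hgm).aestronglyMeasurable (.of_forall fun x => by
      rw [norm_mul, Real.norm_of_nonneg (hpν x), mul_comm]
      exact mul_le_mul_of_nonneg_right (hgV x) (hpν x))
  have hsign : ∀ x, V x * |pν x - pμ x| = pμ x * g x - pν x * g x := fun x => by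
    simp only [g]
    split_ifs with h
    · rw [abs_of_nonpos (sub_nonpos.2 h)]; ring
    · rw [abs_of_pos (sub_pos.2 (not_le.1 h))]; ring
  calc ∫⁻ x, ENNReal.ofReal (V x * |pν x - pμ x|) ∂lam
      = ENNReal.ofReal (∫ x, V x * |pν x - pμ x| ∂lam) :=
        (ofReal_integral_eq_lintegral_ofReal (integrable_mul_abs_sub hV hVμ hVν)
          (.of_forall fun x => mul_nonneg (hV x) (abs_nonneg _))).symm
    _ = ENNReal.ofReal |(∫ x, g x ∂lam.withDensity fun x => ENNReal.ofReal (pμ x))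
          - ∫ x, g x ∂lam.withDensity fun x => ENNReal.ofReal (pν x)| := by
        rw [integral_withDensity_ofReal hpμm hpμ, integral_withDensity_ofReal hpνm hpν,
          ← integral_sub hμg hνg, abs_of_nonneg (integral_nonneg fun x => by
            simp only [← hsign]; exact mul_nonneg (hV x) (abs_nonneg _))]
        simp only [hsign]
    _ ≤ _ := le_iSup (fun g : {g : X → ℝ // Measurable g ∧ ∀ x, |g x| ≤ V x} =>
          ENNReal.ofReal |(∫ x, g.1 x ∂lam.withDensity fun x => ENNReal.ofReal (pμ x))
            - ∫ x, g.1 x ∂lam.withDensity fun x => ENNReal.ofReal (pν x)|) ⟨g, hgm, hgV⟩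

lemma ofReal_mul_enorm_mhKernelFun_sub_le (hqm : Measurable (Function.uncurry q))
    (hq : ∀ x y, 0 < q x y) {cq : ℝ} (hcq : ∀ x y, q x y ≤ cq)
    (hqint : ∀ x, ∫ y, q x y ∂lam = 1) (hfm : Measurable f) (hf : ∀ x, |f x| ≤ V x)
    (hpμm : Measurable pμ) (hpνm : Measurable pν) (hpμ : ∀ x, 0 < pμ x) (hpν : ∀ x, 0 < pν x)
    (hVμ : Integrable (fun x => V x * pμ x) lam) (hVν : Integrable (fun x => V x * pν x) lam)
    (hpρ : ∀ x, 0 ≤ pρ x) (x : X) :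
    ENNReal.ofReal (pρ x) * ‖mhKernelFun lam q pμ x f - mhKernelFun lam q pν x f‖ₑ
      ≤ ∫⁻ y, (∫⁻ t in Set.Icc (0 : ℝ) 1, ENNReal.ofReal (pρ x * ((V x + V y) * q y x) *
          (|pν y - pμ y| / ((1 - t) * pμ x + t * pν x)
            + ((1 - t) * pμ y + t * pν y) * |pν x - pμ x| / ((1 - t) * pμ x + t * pν x) ^ 2)))
        ∂lam := by
  have hV : ∀ x, 0 ≤ V x := fun x => (abs_nonneg _).trans (hf x)
  refine (mul_le_mul_right (enorm_mhKernelFun_sub_le hqm hq hcq hqint hfm hf hpμm hpνm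
    (fun x => (hpμ x).le) (fun x => (hpν x).le) hVμ hVν x) _).trans ?_
  rw [← lintegral_const_mul' _ _ ENNReal.ofReal_ne_top]
  refine lintegral_mono fun y => ?_
  have hC : 0 ≤ pρ x * ((V x + V y) * q y x) :=
    mul_nonneg (hpρ x) (mul_nonneg (add_nonneg (hV x) (hV y)) (hq y x).le)
  calc ENNReal.ofReal (pρ x) * ENNReal.ofReal ((V x + V y) * q y x * |pν y / pν x - pμ y / pμ x|)
      = ENNReal.ofReal (pρ x * ((V x + V y) * q y x)) *
          ENNReal.ofReal |pν y / pν x - pμ y / pμ x| := by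
        rw [← ENNReal.ofReal_mul (hpρ x), ← ENNReal.ofReal_mul hC]
        ring_nf
    _ ≤ _ := by
        refine (mul_le_mul_right (ofReal_abs_div_sub_div_le_lintegral (hpμ x) (hpν x)
          (hpμ y).le (hpν y).le) _).trans_eq ?_
        rw [← lintegral_const_mul' _ _ ENNReal.ofReal_ne_top]
        simp only [← ENNReal.ofReal_mul hC]

lemma lintegral_ofReal_mul_enorm_mhKernelFun_sub_le [SFinite lam]
    (hqm : Measurable (Function.uncurry q)) (hq : ∀ x y, 0 < q x y) {cq : ℝ}
    (hcq : ∀ x y, q x y ≤ cq) (hqint : ∀ x, ∫ y, q x y ∂lam = 1) (hfm : Measurable f)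
    (hf : ∀ x, |f x| ≤ V x) (hVm : Measurable V) (hV1 : ∀ x, 1 ≤ V x)
    (hpμm : Measurable pμ) (hpνm : Measurable pν) (hpμ : ∀ x, 0 < pμ x) (hpν : ∀ x, 0 < pν x)
    (hVμ : Integrable (fun x => V x * pμ x) lam) (hVν : Integrable (fun x => V x * pν x) lam)
    (hpρm : Measurable pρ) (hpρ : ∀ x, 0 ≤ pρ x) :
    ∫⁻ x, ENNReal.ofReal (pρ x) * ‖mhKernelFun lam q pμ x f - mhKernelFun lam q pν x f‖ₑ ∂lam
      ≤ (∫⁻ t in Set.Icc (0 : ℝ) 1,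
            ((∫⁻ z, ⨆ y, ENNReal.ofReal
                ((V y + V z) * (pρ z / ((1 - t) * pμ z + t * pν z)) * q y z / V y) ∂lam)
            + ∫⁻ z, ⨆ y, ENNReal.ofReal
                ((V y + V z) * ((1 - t) * pμ z + t * pν z) * q z y * pρ y /
                  (((1 - t) * pμ y + t * pν y) ^ 2 * V y)) ∂lam))
        * ∫⁻ z, ENNReal.ofReal (V z * |pν z - pμ z|) ∂lam := by
  have hw_fin : ∫⁻ z, ENNReal.ofReal (V z * |pν z - pμ z|) ∂lam ≠ ⊤ :=
    (integrable_mul_abs_sub (fun x => zero_le_one.trans (hV1 x)) hVμ hVν).lintegral_lt_top.ne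
  set F : X → X → ℝ → ℝ≥0∞ := fun x y t => ENNReal.ofReal (pρ x * ((V x + V y) * q y x) *
    (|pν y - pμ y| / ((1 - t) * pμ x + t * pν x)
      + ((1 - t) * pμ y + t * pν y) * |pν x - pμ x| / ((1 - t) * pμ x + t * pν x) ^ 2))
  have hFm : Measurable fun p : (X × X) × ℝ => F p.1.1 p.1.2 p.2 := by
    have : Measurable fun p : (X × X) × ℝ => q p.1.2 p.1.1 :=
      hqm.comp (measurable_fst.snd.prodMk measurable_fst.fst)
    fun_prop
  calc _ ≤ ∫⁻ x, ∫⁻ y, (∫⁻ t in Set.Icc (0 : ℝ) 1, F x y t) ∂lam ∂lam :=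
        lintegral_mono (ofReal_mul_enorm_mhKernelFun_sub_le hqm hq hcq hqint hfm hf hpμm hpνm
          hpμ hpν hVμ hVν hpρ)
    _ = ∫⁻ t in Set.Icc (0 : ℝ) 1, ∫⁻ x, ∫⁻ y, F x y t ∂lam ∂lam :=
        lintegral_lintegral_lintegral_swap hFm
    _ ≤ _ := by
        rw [← lintegral_mul_const' _ _ hw_fin]
        exact setLIntegral_mono' measurableSet_Icc fun t ht =>
          lintegral_lintegral_le_of_le_mul_add_mul (by fun_prop)
            (fun _ => ENNReal.ofReal_ne_top) hw_fin fun x y =>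
            ofReal_mhIntegrand_le hV1 (fun x y => (hq x y).le) (fun x => (hpμ x).le)
              (fun x => (hpν x).le) hpρ ht x y

end Lipschitz

theorem stmt_10_general {X : Type*} [MeasurableSpace X]
    (lam : Measure X) [SigmaFinite lam]
    (V : X → ℝ) (hVm : Measurable V) (hV1 : ∀ x, 1 ≤ V x)
    (q : X → X → ℝ) (hqm : Measurable (Function.uncurry q))
    (hqpos : ∀ x y, 0 < q x y) (hqb : ∃ c, ∀ x y, q x y ≤ c)
    (hqint : ∀ x, ∫ y, q x y ∂lam = 1)
    (pμ pν : X → ℝ) (hpμm : Measurable pμ) (hpνm : Measurable pν)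
    (hpμpos : ∀ x, 0 < pμ x) (hpνpos : ∀ x, 0 < pν x)
    (hpμb : ∃ c, ∀ x, pμ x ≤ c) (hpνb : ∃ c, ∀ x, pν x ≤ c)
    (hVμ : Integrable (fun x => V x * pμ x) lam)
    (hVν : Integrable (fun x => V x * pν x) lam)
    (pρ : X → ℝ) (hpρm : Measurable pρ) (hpρ0 : ∀ x, 0 ≤ pρ x)
    (hρμ : ∃ c, ∀ x, pρ x ≤ c * pμ x ^ 2)
    (hρν : ∃ c, ∀ x, pρ x ≤ c * pν x ^ 2) :
    ∀ f : X → ℝ, Measurable f → (∀ x, |f x| ≤ V x) →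
      ENNReal.ofReal
          |(∫ x, mhKernelFun lam q pμ x f
              ∂(lam.withDensity fun x => ENNReal.ofReal (pρ x)))
            - ∫ x, mhKernelFun lam q pν x f
                ∂(lam.withDensity fun x => ENNReal.ofReal (pρ x))|
        ≤ (∫⁻ t in Set.Icc (0 : ℝ) 1,
              ((∫⁻ z, ⨆ y, ENNReal.ofReal
                  ((V y + V z) * (pρ z / ((1 - t) * pμ z + t * pν z)) * q y z / V y)
                ∂lam)
              + ∫⁻ z, ⨆ y, ENNReal.ofReal
                  ((V y + V z) * ((1 - t) * pμ z + t * pν z) * q z y * pρ y /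
                    (((1 - t) * pμ y + t * pν y) ^ 2 * V y))
                ∂lam))
          * vDistE V (lam.withDensity fun x => ENNReal.ofReal (pμ x))
              (lam.withDensity fun x => ENNReal.ofReal (pν x)) := by
  intro f hfm hf
  obtain ⟨cq, hcq⟩ := hqb
  obtain ⟨cμ, hcμ⟩ := hpμb
  obtain ⟨cν, hcν⟩ := hpνb
  obtain ⟨cρμ, hρμ⟩ := hρμ
  obtain ⟨cρν, hρν⟩ := hρν
  have hV : ∀ x, 0 ≤ V x := fun x => zero_le_one.trans (hV1 x)
  have hpμ : ∀ x, 0 ≤ pμ x := fun x => (hpμpos x).le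
  have hpν : ∀ x, 0 ≤ pν x := fun x => (hpνpos x).le
  calc _ ≤ ∫⁻ x, ENNReal.ofReal (pρ x) *
          ‖mhKernelFun lam q pμ x f - mhKernelFun lam q pν x f‖ₑ ∂lam :=
        ofReal_abs_integral_sub_le_lintegral_withDensity hpρm
          (integrable_mhKernelFun_withDensity hqm hpμm hpμ hqpos hcq hqint hfm hf hV1 hVμ hpρm
            hpρ0 hρμ hcμ)
          (integrable_mhKernelFun_withDensity hqm hpνm hpν hqpos hcq hqint hfm hf hV1 hVν hpρm
            hpρ0 hρν hcν)
    _ ≤ _ * ∫⁻ z, ENNReal.ofReal (V z * |pν z - pμ z|) ∂lam :=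
        lintegral_ofReal_mul_enorm_mhKernelFun_sub_le hqm hqpos hcq hqint hfm hf hVm hV1 hpμm
          hpνm hpμpos hpνpos hVμ hVν hpρm hpρ0
    _ ≤ _ := by
        gcongr
        exact lintegral_ofReal_mul_abs_sub_le_vDistE hVm hV hpμm hpνm hpμ hpν hVμ hVν

/-- **Lipschitz (mean value) inequality for Metropolis–Hastings kernels (density case):**
for every measurable `f` with `‖f‖_V ≤ 1`,
`|P_μ(ρ,f) - P_ν(ρ,f)| ≤ M_ρ ‖μ - ν‖_V`, where
`M_ρ = ∫_0^1 { ∫ sup_y [(V(y)+V(z)) (pρ(z)/p_t(z)) q(y,z) / V(y)] λ(dz)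
  + ∫ sup_y [(V(y)+V(z)) p_t(z) q(z,y) pρ(y) / (p_t(y)² V(y))] λ(dz) } dt`,
with `p_t = (1-t) pμ + t pν`. -/
theorem stmt_10 {X : Type*} [MeasurableSpace X]
    (lam : Measure X) [SigmaFinite lam]
    (V : X → ℝ) (hVm : Measurable V) (hV1 : ∀ x, 1 ≤ V x)
    (q : X → X → ℝ) (hqm : Measurable (Function.uncurry q))
    (hqpos : ∀ x y, 0 < q x y) (hqb : ∃ c, ∀ x y, q x y ≤ c)
    (hqint : ∀ x, ∫ y, q x y ∂lam = 1)
    (pμ pν : X → ℝ) (hpμm : Measurable pμ) (hpνm : Measurable pν)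
    (hpμpos : ∀ x, 0 < pμ x) (hpνpos : ∀ x, 0 < pν x)
    (hpμb : ∃ c, ∀ x, pμ x ≤ c) (hpνb : ∃ c, ∀ x, pν x ≤ c)
    (hμprob : IsProbabilityMeasure (lam.withDensity fun x => ENNReal.ofReal (pμ x)))
    (hνprob : IsProbabilityMeasure (lam.withDensity fun x => ENNReal.ofReal (pν x)))
    (hVμ : Integrable (fun x => V x * pμ x) lam)
    (hVν : Integrable (fun x => V x * pν x) lam)
    (pρ : X → ℝ) (hpρm : Measurable pρ) (hpρ0 : ∀ x, 0 ≤ pρ x)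
    (hρprob : IsProbabilityMeasure (lam.withDensity fun x => ENNReal.ofReal (pρ x)))
    (hρμ : ∃ c, ∀ x, pρ x ≤ c * pμ x ^ 2)
    (hρν : ∃ c, ∀ x, pρ x ≤ c * pν x ^ 2) :
    ∀ f : X → ℝ, Measurable f → (∀ x, |f x| ≤ V x) →
      ENNReal.ofReal
          |(∫ x, mhKernelFun lam q pμ x f
              ∂(lam.withDensity fun x => ENNReal.ofReal (pρ x)))
            - ∫ x, mhKernelFun lam q pν x f
                ∂(lam.withDensity fun x => ENNReal.ofReal (pρ x))|
        ≤ (∫⁻ t in Set.Icc (0 : ℝ) 1,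
              ((∫⁻ z, ⨆ y, ENNReal.ofReal
                  ((V y + V z) * (pρ z / ((1 - t) * pμ z + t * pν z)) * q y z / V y)
                ∂lam)
              + ∫⁻ z, ⨆ y, ENNReal.ofReal
                  ((V y + V z) * ((1 - t) * pμ z + t * pν z) * q z y * pρ y /
                    (((1 - t) * pμ y + t * pν y) ^ 2 * V y))
                ∂lam))
          * vDistE V (lam.withDensity fun x => ENNReal.ofReal (pμ x))
              (lam.withDensity fun x => ENNReal.ofReal (pν x)) :=
  stmt_10_general lam V hVm hV1 q hqm hqpos hqb hqint pμ pν hpμm hpνm hpμpos hpνpos hpμb hpνb hVμ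
    hVν pρ hpρm hpρ0 hρμ hρν
end
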